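/- Let P(z) = (2/27)(z²+3)³(z²−1) + 1. Every point of the real interval [−1,1] has bounded forward orbit under iteration of P; consequently [−1,1] is contained in the filled Julia set K_P = {z ∈ ℂ : (P^n(z))_{n≥0} is bounded}. -/

import Mathlib

/-!
`P` has real coefficients, so it restricts to a real polynomial. With `t = x² ∈ [0, 1]`,
`(t + 3)³(t − 1)` is nonpositive and increasing in `t` (its derivative is `4t(t + 3)²`), hence
lies in `[−27, 0]`; so `P` maps `[−1, 1]` into itself and every real orbit starting there stays in
the unit interval.
-/

/-- The polynomial `P(z) = (2/27)(z²+3)³(z²−1) + 1`. -/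
noncomputable def Ppoly (z : ℂ) : ℂ := (2 / 27) * (z ^ 2 + 3) ^ 3 * (z ^ 2 - 1) + 1

noncomputable def Preal (x : ℝ) : ℝ := (2 / 27) * (x ^ 2 + 3) ^ 3 * (x ^ 2 - 1) + 1

lemma semiconj_ofReal_Preal_Ppoly : Function.Semiconj ((↑) : ℝ → ℂ) Preal Ppoly := fun x => by
  simp [Ppoly, Preal]

lemma cube_add_three_mul_sub_one_mem_Icc {t : ℝ} (ht : t ∈ Set.Icc (0 : ℝ) 1) :
    (t + 3) ^ 3 * (t - 1) ∈ Set.Icc (-27 : ℝ) 0 := by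
  obtain ⟨ht0, ht1⟩ := ht
  constructor
  · nlinarith [mul_nonneg ht0 (sq_nonneg t), mul_nonneg ht0 ht0]
  · exact mul_nonpos_of_nonneg_of_nonpos (by positivity) (by linarith)

lemma Preal_mapsTo_Icc : Set.MapsTo Preal (Set.Icc (-1) 1) (Set.Icc (-1) 1) := by
  intro x hx
  have hsq : x ^ 2 ∈ Set.Icc (0 : ℝ) 1 :=
    ⟨sq_nonneg x, sq_le_one_iff_abs_le_one x |>.2 (abs_le.2 hx)⟩
  obtain ⟨hlo, hhi⟩ := cube_add_three_mul_sub_one_mem_Icc hsq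
  constructor <;> · unfold Preal; linarith

/-- Every point of the real interval `[-1,1]` has bounded forward orbit under `P`;
consequently `[-1,1]` is contained in the filled Julia set
`K_P = {z : (Pⁿ(z))ₙ is bounded}`. -/
theorem interval_subset_filled_julia_set :
    ∀ x : ℝ, x ∈ Set.Icc (-1 : ℝ) 1 →
      (∃ M : ℝ, ∀ n : ℕ, ‖Ppoly^[n] (x : ℂ)‖ ≤ M) ∧
      (x : ℂ) ∈ {z : ℂ | ∃ M : ℝ, ∀ n : ℕ, ‖Ppoly^[n] z‖ ≤ M} := by
  intro x hx
  have hbound : ∀ n : ℕ, ‖Ppoly^[n] (x : ℂ)‖ ≤ 1 := fun n => by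
    rw [← semiconj_ofReal_Preal_Ppoly.iterate_right n x, Complex.norm_real, Real.norm_eq_abs,
      abs_le]
    exact Preal_mapsTo_Icc.iterate n hx
  exact ⟨⟨1, hbound⟩, ⟨1, hbound⟩⟩
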